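/- Let m be a mesh pattern in the class Γ, i.e. cl(m) has exactly one descent, the descent bottom is the letter 1, and sh(m) consists of all boxes southwest of the point of value 1. Then the interval [21^{(0,0),(1,0)}, m] in the mesh pattern poset is isomorphic as a poset to the interval [0, w] in the poset of finite binary words ordered by subword containment, where w is the binary word of length |m| − 1 whose i-th letter (for 2 ≤ i ≤ |m|, reindexed) is 0 if the letter i of cl(m) appears before the letter 1, and 1 otherwise. -/

import Mathlib

/-!
# The poset of mesh patterns

A mesh pattern is a permutation of `{1, ..., len}` together with a set of shaded
boxes in the `(len+1) × (len+1)` grid (boxes are indexed by their south-west corner,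
so boxes have coordinates in `{0, ..., len} × {0, ..., len}`).

We normalise the permutation as a function `ℕ → ℕ` (using 1-based indexing) which is
`0` outside of `[1, len]`; this makes equality of mesh patterns coincide with equality
of the underlying data.
-/

structure MeshPattern where
  len : ℕ
  perm : ℕ → ℕ
  sh : Finset (ℕ × ℕ)
  perm_mem : ∀ i, 1 ≤ i → i ≤ len → 1 ≤ perm i ∧ perm i ≤ len
  perm_zero : ∀ i, i = 0 ∨ len < i → perm i = 0
  perm_inj : ∀ i j, 1 ≤ i → i ≤ len → 1 ≤ j → j ≤ len → perm i = perm j → i = j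
  perm_surj : ∀ v, 1 ≤ v → v ≤ len → ∃ i, 1 ≤ i ∧ i ≤ len ∧ perm i = v
  sh_mem : ∀ q ∈ sh, q.1 ≤ len ∧ q.2 ≤ len

namespace MeshPattern

/-- The (1-based) position of the value `v` in the underlying permutation of `m`. -/
noncomputable def pos (m : MeshPattern) (v : ℕ) : ℕ := Function.invFun m.perm v

/-- The dimension of a mesh pattern: length of the permutation plus number of shaded boxes. -/
def dim (m : MeshPattern) : ℕ := m.len + m.sh.card

/-- Given (the position map of an occurrence) `η` of `m` in `p`, the extended column
boundary map: pattern column boundary `i` (for `0 ≤ i ≤ m.len + 1`) is sent to the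
corresponding column boundary in `p`.  Boxes of `p` with first coordinate `a` satisfying
`colExt m p η i ≤ a < colExt m p η (i+1)` are exactly the boxes lying horizontally
within the region corresponding to pattern boxes with first coordinate `i`. -/
def colExt (m p : MeshPattern) (η : ℕ → ℕ) (i : ℕ) : ℕ :=
  if i = 0 then 0 else if i ≤ m.len then η i else p.len + 1

/-- The analogous extended row (value) boundary map. -/
noncomputable def valExt (m p : MeshPattern) (η : ℕ → ℕ) (j : ℕ) : ℕ :=
  if j = 0 then 0 else if j ≤ m.len then p.perm (η (m.pos j)) else p.len + 1

/-- The box `(a, b)` of `p` lies in the region `R_η(i, j)` of the box `(i, j)` of `m`. -/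
def inRegion (m p : MeshPattern) (η : ℕ → ℕ) (i j a b : ℕ) : Prop :=
  colExt m p η i ≤ a ∧ a < colExt m p η (i + 1) ∧
    valExt m p η j ≤ b ∧ b < valExt m p η (j + 1)

/-- The point of `p` at position `y` lies in the open interior of the region `R_η(i, j)`. -/
def interiorPt (m p : MeshPattern) (η : ℕ → ℕ) (i j y : ℕ) : Prop :=
  colExt m p η i < y ∧ y < colExt m p η (i + 1) ∧
    valExt m p η j < p.perm y ∧ p.perm y < valExt m p η (j + 1)

/-- `η` is an occurrence of the mesh pattern `m` in the mesh pattern `p`: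
a (normalised) strictly increasing choice of positions realising the underlying
classical pattern, such that for every shaded box of `m` the corresponding region of `p`
contains no point of `p` in its interior and consists entirely of shaded boxes of `p`. -/
structure IsOcc (m p : MeshPattern) (η : ℕ → ℕ) : Prop where
  zero : ∀ i, i = 0 ∨ m.len < i → η i = 0
  mem : ∀ i, 1 ≤ i → i ≤ m.len → 1 ≤ η i ∧ η i ≤ p.len
  mono : ∀ i j, 1 ≤ i → i < j → j ≤ m.len → η i < η j
  pattern : ∀ i j, 1 ≤ i → i ≤ m.len → 1 ≤ j → j ≤ m.len →
    (m.perm i < m.perm j ↔ p.perm (η i) < p.perm (η j))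
  no_point : ∀ q ∈ m.sh, ∀ y, 1 ≤ y → y ≤ p.len → ¬ interiorPt m p η q.1 q.2 y
  shaded : ∀ q ∈ m.sh, ∀ a b, inRegion m p η q.1 q.2 a b → (a, b) ∈ p.sh

/-- The mesh pattern poset: `m ≤ p` iff there is an occurrence of `m` in `p`. -/
instance : LE MeshPattern := ⟨fun m p => ∃ η, IsOcc m p η⟩

instance : LT MeshPattern := ⟨fun m p => m ≤ p ∧ m ≠ p⟩

/-- `b` covers `a` in the mesh pattern poset. -/
def CovByM (a b : MeshPattern) : Prop := a < b ∧ ¬ ∃ z, a < z ∧ z < b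

open Classical in
/-- The Möbius function of a (locally finite) partial order `r`, computed with a fuel
parameter: `muFuel r n a b` is the Möbius function `μ(a, b)` provided `n` is at least the
length of the longest chain from `a` to `b` (with the convention `μ(a, b) = 0` if
`¬ r a b`). -/
noncomputable def muFuel {α : Type*} (r : α → α → Prop) : ℕ → α → α → ℤ
  | 0, a, b => if a = b then 1 else 0
  | n + 1, a, b =>
      if a = b then 1
      else if r a b then - ∑ᶠ c ∈ {c | r a c ∧ r c b ∧ c ≠ b}, muFuel r n a c
      else 0

/-- The Möbius function of the mesh pattern poset.  Since every chain from `m` to `p` has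
length at most `dim p`, the fuel `dim p + 1` is sufficient, so this is the genuine Möbius
function: `mu m m = 1`, `mu m p = -∑_{m ≤ c < p} mu m c` for `m < p`, and `mu m p = 0`
when `m ≰ p`. -/
noncomputable def mu (m p : MeshPattern) : ℤ := muFuel (· ≤ ·) (p.dim + 1) m p

/-- The classical permutation poset `𝓟`, realised as the subposet of unshaded mesh
patterns (for unshaded patterns, mesh occurrence is exactly classical pattern
containment).  Its Möbius function. -/
noncomputable def muP (σ π : {m : MeshPattern // m.sh = ∅}) : ℤ :=
  muFuel (· ≤ ·) (π.1.len + 1) σ π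

/-- The mesh pattern with underlying identity permutation of length `n`
and shaded boxes `s`. -/
def ofId (n : ℕ) (s : Finset (ℕ × ℕ)) (hs : ∀ q ∈ s, q.1 ≤ n ∧ q.2 ≤ n) : MeshPattern where
  len := n
  perm := fun i => if 1 ≤ i ∧ i ≤ n then i else 0
  sh := s
  perm_mem := by intro i h1 h2; (try dsimp only); rw [if_pos ⟨h1, h2⟩]; omega
  perm_zero := by intro i h; (try dsimp only); rw [if_neg]; omega
  perm_inj := by intro i j h1 h2 h3 h4 h; (try dsimp only at h); rw [if_pos ⟨h1, h2⟩, if_pos ⟨h3, h4⟩] at h; omega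
  perm_surj := by
    intro v h1 h2; exact ⟨v, h1, h2, by (try dsimp only); rw [if_pos ⟨h1, h2⟩]⟩
  sh_mem := hs

/-- The mesh pattern with underlying decreasing permutation of length `n`
and shaded boxes `s`. -/
def ofRev (n : ℕ) (s : Finset (ℕ × ℕ)) (hs : ∀ q ∈ s, q.1 ≤ n ∧ q.2 ≤ n) : MeshPattern where
  len := n
  perm := fun i => if 1 ≤ i ∧ i ≤ n then n + 1 - i else 0
  sh := s
  perm_mem := by intro i h1 h2; (try dsimp only); rw [if_pos ⟨h1, h2⟩]; omega
  perm_zero := by intro i h; (try dsimp only); rw [if_neg]; omega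
  perm_inj := by intro i j h1 h2 h3 h4 h; (try dsimp only at h); rw [if_pos ⟨h1, h2⟩, if_pos ⟨h3, h4⟩] at h; omega
  perm_surj := by
    intro v h1 h2
    exact ⟨n + 1 - v, by omega, by omega, by (try dsimp only); rw [if_pos ⟨by omega, by omega⟩]; omega⟩
  sh_mem := hs

/-- The unshaded singleton mesh pattern `1^∅`. -/
def one0 : MeshPattern := ofId 1 ∅ (by simp)

/-- The empty mesh pattern `ε^∅`. -/
def eps0 : MeshPattern := ofId 0 ∅ (by simp)

/-- The empty mesh pattern `ε^{(0,0)}` with its single box shaded. -/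
def eps00 : MeshPattern := ofId 0 {(0, 0)} (by decide)

/-- The singleton mesh patterns `1^{(a,b)}` for `a b ∈ {0,1}`. -/
def one00 : MeshPattern := ofId 1 {(0, 0)} (by decide)
def one10 : MeshPattern := ofId 1 {(1, 0)} (by decide)
def one01 : MeshPattern := ofId 1 {(0, 1)} (by decide)
def one11 : MeshPattern := ofId 1 {(1, 1)} (by decide)

/-- The mesh pattern `21^{(0,0),(1,0)}`. -/
def pat21 : MeshPattern := ofRev 2 {(0, 0), (1, 0)} (by decide)

/-- Replace the shading of `p` by a subset `A ⊆ sh p` (same underlying permutation):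
this is the mesh pattern `(cl p)^A`. -/
def reshade (p : MeshPattern) (A : Finset (ℕ × ℕ)) (hA : A ⊆ p.sh) : MeshPattern :=
  { p with sh := A, sh_mem := fun q hq => p.sh_mem q (hA hq) }

/-- The occurrence `η` of `s` in `p` uses the shaded box `(a, b) ∈ sh p`. -/
def UsesBox (s p : MeshPattern) (η : ℕ → ℕ) (a b : ℕ) : Prop :=
  (a, b) ∈ p.sh ∧ ∃ i j, (i, j) ∈ s.sh ∧ inRegion s p η i j a b

/-- The position map of the occurrence of `p − x` in `p` avoiding the point at
position `x`. -/
def etaDel (p : MeshPattern) (x : ℕ) : ℕ → ℕ := fun i =>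
  if 1 ≤ i ∧ i ≤ p.len - 1 then (if i < x then i else i + 1) else 0

/-- The underlying permutation of the pattern obtained from `p` by deleting the point at
position `x`. -/
def delPerm (p : MeshPattern) (x : ℕ) : ℕ → ℕ := fun i =>
  if 1 ≤ i ∧ i ≤ p.len - 1 then
    (if p.perm (etaDel p x i) < p.perm x then p.perm (etaDel p x i)
     else p.perm (etaDel p x i) - 1)
  else 0

/-- `q` is the mesh pattern `p − x` obtained from `p` by deleting the point at position
`x` (where `1 ≤ x ≤ len p`): the underlying permutation is obtained by deleting that
letter, and a box of `q` is shaded exactly when the corresponding region of `p` (under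
the occurrence `etaDel p x`) is entirely shaded and contains no point of `p` in its
interior.  In particular `etaDel p x` is an occurrence of `q` in `p`. -/
def IsDeletion (p : MeshPattern) (x : ℕ) (q : MeshPattern) : Prop :=
  1 ≤ x ∧ x ≤ p.len ∧ q.len + 1 = p.len ∧ q.perm = delPerm p x ∧
    ∀ i j : ℕ, ((i, j) ∈ q.sh ↔ i ≤ q.len ∧ j ≤ q.len ∧
      (∀ a b, inRegion q p (etaDel p x) i j a b → (a, b) ∈ p.sh) ∧
      ∀ y, 1 ≤ y → y ≤ p.len → ¬ interiorPt q p (etaDel p x) i j y)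

/-- Deleting the point at position `x` of `p` (with `q = p − x`) merges shadings:
some shaded box of `q` corresponds to more than one shaded box of `p`. -/
def MergesShadings (p : MeshPattern) (x : ℕ) (q : MeshPattern) : Prop :=
  ∃ i j, (i, j) ∈ q.sh ∧ ∃ a b a' b', (a, b) ≠ (a', b') ∧ (a, b) ∈ p.sh ∧
    (a', b') ∈ p.sh ∧ inRegion q p (etaDel p x) i j a b ∧
    inRegion q p (etaDel p x) i j a' b'

/-- `f 0 ⋖ f 1 ⋖ ⋯ ⋖ f k` is a maximal chain of length `k` from `a` to `b`. -/
def IsMaxChain (a b : MeshPattern) (k : ℕ) (f : ℕ → MeshPattern) : Prop :=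
  f 0 = a ∧ f k = b ∧ ∀ i < k, CovByM (f i) (f (i + 1))

/-- Underlying permutation of the direct sum `s ⊕ t`. -/
def dsumPerm (s t : MeshPattern) : ℕ → ℕ := fun i =>
  if i ≤ s.len then s.perm i
  else if i ≤ s.len + t.len then t.perm (i - s.len) + s.len
  else 0

/-- Shading of the direct sum `s ⊕ t`: the shadings of `s` and of `t` (translated), where
boxes on the shared boundary are extended to the new boundary (north/east for boxes of
`s`, south/west for boxes of `t`). -/
def dsumSh (s t : MeshPattern) : Finset (ℕ × ℕ) :=
  s.sh ∪ t.sh.image (fun q => (q.1 + s.len, q.2 + s.len)) ∪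
    (s.sh.filter (fun q => q.2 = s.len)).biUnion
      (fun q => (Finset.range (t.len + 1)).image (fun k => (q.1, s.len + k))) ∪
    (s.sh.filter (fun q => q.1 = s.len)).biUnion
      (fun q => (Finset.range (t.len + 1)).image (fun k => (s.len + k, q.2))) ∪
    (t.sh.filter (fun q => q.2 = 0)).biUnion
      (fun q => (Finset.range (s.len + 1)).image (fun k => (q.1 + s.len, k))) ∪
    (t.sh.filter (fun q => q.1 = 0)).biUnion
      (fun q => (Finset.range (s.len + 1)).image (fun k => (k, q.2 + s.len)))

/-- `r = s ⊕ t` is the direct sum of the mesh patterns `s` and `t` (defined when the top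
right corner box of `s` and the bottom left corner box of `t` are not shaded). -/
def IsDSum (s t r : MeshPattern) : Prop :=
  (s.len, s.len) ∉ s.sh ∧ (0, 0) ∉ t.sh ∧
    r.len = s.len + t.len ∧ r.perm = dsumPerm s t ∧ r.sh = dsumSh s t

/-- A mesh pattern is indecomposable if it cannot be written as a direct sum `a ⊕ b`
with neither `a` nor `b` equal to it. -/
def Indecomposable (m : MeshPattern) : Prop :=
  ¬ ∃ s t, s ≠ m ∧ t ≠ m ∧ IsDSum s t m

/-- `SumOfList L m`: `m` is the direct sum of the list `L` of mesh patterns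
(the empty list summing to the empty pattern `ε^∅`). -/
def SumOfList : List MeshPattern → MeshPattern → Prop
  | [], m => m.len = 0 ∧ m.sh = ∅
  | [a], m => a = m
  | a :: b :: rest, m => ∃ r, SumOfList (b :: rest) r ∧ IsDSum a r m

/-- Underlying permutation of the skew sum `s ⊖ t`. -/
def sksumPerm (s t : MeshPattern) : ℕ → ℕ := fun i =>
  if i = 0 then 0
  else if i ≤ s.len then s.perm i + t.len
  else if i ≤ s.len + t.len then t.perm (i - s.len)
  else 0

/-- Shading of the skew sum `s ⊖ t` (s placed to the north west of `t`), with boxes on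
the shared boundary extended to the new boundary. -/
def sksumSh (s t : MeshPattern) : Finset (ℕ × ℕ) :=
  s.sh.image (fun q => (q.1, q.2 + t.len)) ∪ t.sh.image (fun q => (q.1 + s.len, q.2)) ∪
    (s.sh.filter (fun q => q.1 = s.len)).biUnion
      (fun q => (Finset.range (t.len + 1)).image (fun k => (s.len + k, q.2 + t.len))) ∪
    (s.sh.filter (fun q => q.2 = 0)).biUnion
      (fun q => (Finset.range (t.len + 1)).image (fun k => (q.1, k))) ∪
    (t.sh.filter (fun q => q.2 = t.len)).biUnion
      (fun q => (Finset.range (s.len + 1)).image (fun k => (q.1 + s.len, t.len + k))) ∪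
    (t.sh.filter (fun q => q.1 = 0)).biUnion
      (fun q => (Finset.range (s.len + 1)).image (fun k => (k, q.2)))

/-- `r = s ⊖ t` is the skew sum of the mesh patterns `s` and `t` (defined when the bottom
right corner box of `s` and the top left corner box of `t` are not shaded). -/
def IsSkewSum (s t r : MeshPattern) : Prop :=
  (s.len, 0) ∉ s.sh ∧ (0, t.len) ∉ t.sh ∧
    r.len = s.len + t.len ∧ r.perm = sksumPerm s t ∧ r.sh = sksumSh s t

/-- A mesh pattern is skew-indecomposable if it cannot be written as a skew sum `a ⊖ b`
with neither `a` nor `b` equal to it. -/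
def SkewIndecomposable (m : MeshPattern) : Prop :=
  ¬ ∃ s t, s ≠ m ∧ t ≠ m ∧ IsSkewSum s t m

/-- Connectivity (zig-zag of comparabilities) inside a subset `I` of the mesh pattern
poset. -/
def ConnIn (I : Set MeshPattern) (a b : MeshPattern) : Prop :=
  Relation.ReflTransGen (fun u v => u ∈ I ∧ v ∈ I ∧ (u ≤ v ∨ v ≤ u)) a b

/-- The interval `[m, p]` is strongly disconnected: its open interior has at least two
connected components each containing more than one element. -/
def StronglyDisconnectedInterval (m p : MeshPattern) : Prop :=
  ∃ a b, (m < a ∧ a < p) ∧ (m < b ∧ b < p) ∧ ¬ ConnIn {c | m < c ∧ c < p} a b ∧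
    (∃ a', (m < a' ∧ a' < p) ∧ a' ≠ a ∧ ConnIn {c | m < c ∧ c < p} a a') ∧
    (∃ b', (m < b' ∧ b' < p) ∧ b' ≠ b ∧ ConnIn {c | m < c ∧ c < p} b b')

/-- The occurrence of `m` in `m ⊕ m` (or `m ⊖ m`) as the first `|m|` points. -/
def eta1 (m : MeshPattern) : ℕ → ℕ := fun i => if 1 ≤ i ∧ i ≤ m.len then i else 0

/-- The occurrence of `m` in `m ⊕ m` (or `m ⊖ m`) as the last `|m|` points. -/
def eta2 (m : MeshPattern) : ℕ → ℕ := fun i => if 1 ≤ i ∧ i ≤ m.len then i + m.len else 0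

/-- `i` (with `2 ≤ i ≤ len`) is the position of an adjacency tail: the letter at
position `i` differs by one from the letter at position `i - 1`. -/
def IsAdjTail (m : MeshPattern) (i : ℕ) : Prop :=
  2 ≤ i ∧ i ≤ m.len ∧ (m.perm i = m.perm (i - 1) + 1 ∨ m.perm (i - 1) = m.perm i + 1)

open Classical in
/-- `adj(cl m)`: the number of adjacency tails of the underlying permutation of `m`. -/
noncomputable def adjCount (m : MeshPattern) : ℕ :=
  ((Finset.range (m.len + 1)).filter (fun i => IsAdjTail m i)).card

/-- The total number of mesh patterns of length `n`. -/
def Tcount (n : ℕ) : ℕ := n.factorial * 2 ^ ((n + 1) ^ 2)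

end MeshPattern

/-- Binary words, partially ordered by (not necessarily contiguous) subword containment:
the poset `𝓦`. -/
structure Word where
  toList : List Bool

instance : LE Word := ⟨fun u w => u.toList.Sublist w.toList⟩

/-- The binary word associated to a mesh pattern `m` in the class `Γ`: it has length
`|m| - 1`, and for each letter `i` with `2 ≤ i ≤ |m|` the corresponding entry is
`false` (i.e. `0`) if the letter `i` appears before the letter `1` in `cl m`,
and `true` (i.e. `1`) otherwise. -/
noncomputable def MeshPattern.wordOf (m : MeshPattern) : List Bool :=
  (List.range (m.len - 1)).map (fun k => if m.pos (k + 2) < m.pos 1 then false else true)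

namespace MeshPattern

/-!
Between patterns of `Γ`, an occurrence must send the letter `1` to `1` (the shaded box `(0, 0)`
leaves no room below it), so it amounts to an order-preserving map of letters keeping each letter
on its side of `1`; conversely such a map is realised by an occurrence, because both sides of `1`
are increasing. On words these maps are exactly the subword embeddings, so on `Γ` the pattern
order is the subword order of the words. If `21^{(0,0),(1,0)} ≤ c ≤ m` with `m ∈ Γ`, the shaded
boxes of `21^{(0,0),(1,0)}` shade every box of `c` south-west of `1`, while the occurrence in `m`
confines the shading of `c` to those boxes and makes every descent of `c` end at `1`; so `c ∈ Γ`.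
An occurrence between patterns of the same length is the identity, so a pattern of `Γ` is
determined by its word, and every word containing a `0` is the word of a pattern of `Γ`.
-/

variable {m p c c' : MeshPattern} {η φ : ℕ → ℕ} {d d' : ℕ}

lemma _root_.StrictMonoOn.apply_eq_self {α : Type*} [LinearOrder α] {f : α → α}
    {s : Set α} [Finite s] (hf : StrictMonoOn f s) (hs : Set.MapsTo f s s) {x : α} (hx : x ∈ s) :
    f x = x :=
  congrArg Subtype.val
    (StrictMono.apply_eq (f := hs.restrict f s s) (x := ⟨x, hx⟩) fun a b h => hf a.2 b.2 h)

lemma _root_.List.rel_getElem_append_succ {α : Type*} {R : α → α → Prop} {A B : List α}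
    (hA : A.Pairwise R) (hB : B.Pairwise R) {i : ℕ} (hi : i + 1 < (A ++ B).length)
    (hiA : i + 1 ≠ A.length) : R (A ++ B)[i] (A ++ B)[i + 1] := by
  rw [List.length_append] at hi
  rcases Nat.lt_or_ge (i + 1) A.length with h | h
  · rw [List.getElem_append_left (by omega), List.getElem_append_left h]
    exact List.pairwise_iff_getElem.mp hA _ _ _ _ (Nat.lt_succ_self i)
  · rw [List.getElem_append_right (by omega), List.getElem_append_right h]
    exact List.pairwise_iff_getElem.mp hB _ _ _ _ (by omega)

lemma ext (hlen : c.len = c'.len) (hperm : c.perm = c'.perm) (hsh : c.sh = c'.sh) : c = c' := by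
  cases c; cases c'; cases hlen; cases hperm; cases hsh; rfl

lemma perm_pos {v : ℕ} (h1 : 1 ≤ v) (h2 : v ≤ m.len) : m.perm (m.pos v) = v := by
  obtain ⟨i, -, -, hi⟩ := m.perm_surj v h1 h2
  exact Function.invFun_eq ⟨i, hi⟩

lemma pos_mem {v : ℕ} (h1 : 1 ≤ v) (h2 : v ≤ m.len) : 1 ≤ m.pos v ∧ m.pos v ≤ m.len := by
  by_contra hout
  have := m.perm_zero (m.pos v) (by omega)
  rw [perm_pos h1 h2] at this
  omega

lemma pos_eq_of_perm_eq {i v : ℕ} (h1 : 1 ≤ i) (h2 : i ≤ m.len) (h : m.perm i = v) :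
    m.pos v = i := by
  have hv := m.perm_mem i h1 h2
  rw [h] at hv
  have := pos_mem hv.1 hv.2
  exact m.perm_inj _ _ this.1 this.2 h1 h2 ((perm_pos hv.1 hv.2).trans h.symm)

lemma pos_perm {i : ℕ} (h1 : 1 ≤ i) (h2 : i ≤ m.len) : m.pos (m.perm i) = i :=
  pos_eq_of_perm_eq h1 h2 rfl

@[simp] lemma colExt_zero : colExt m p η 0 = 0 := rfl

lemma colExt_of_le {i : ℕ} (h1 : 1 ≤ i) (h2 : i ≤ m.len) : colExt m p η i = η i := by
  simp [colExt, h2, Nat.one_le_iff_ne_zero.mp h1]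

lemma colExt_of_lt {i : ℕ} (h : m.len < i) : colExt m p η i = p.len + 1 := by
  simp [colExt, Nat.not_le.mpr h, show i ≠ 0 by omega]

@[simp] lemma valExt_zero : valExt m p η 0 = 0 := by simp [valExt]

lemma valExt_of_le {j : ℕ} (h1 : 1 ≤ j) (h2 : j ≤ m.len) :
    valExt m p η j = p.perm (η (m.pos j)) := by
  simp [valExt, h2, Nat.one_le_iff_ne_zero.mp h1]

lemma valExt_of_lt {j : ℕ} (h : m.len < j) : valExt m p η j = p.len + 1 := by
  simp [valExt, Nat.not_le.mpr h, show j ≠ 0 by omega]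

namespace IsOcc

lemma strictMonoOn (hη : IsOcc m p η) : StrictMonoOn η (Set.Icc 1 m.len) :=
  fun i hi j hj hij => hη.mono i j hi.1 hij hj.2

lemma perm_mem (hη : IsOcc m p η) {i : ℕ} (h1 : 1 ≤ i) (h2 : i ≤ m.len) :
    1 ≤ p.perm (η i) ∧ p.perm (η i) ≤ p.len :=
  p.perm_mem _ (hη.mem i h1 h2).1 (hη.mem i h1 h2).2

lemma colExt_lt_succ (hη : IsOcc m p η) {i : ℕ} (hi : i ≤ m.len) :
    colExt m p η i < colExt m p η (i + 1) := by
  rcases Nat.eq_zero_or_pos i with rfl | hi0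
  · rcases Nat.eq_zero_or_pos m.len with h0 | h0
    · simp [colExt_of_lt (show m.len < 0 + 1 by omega)]
    · rw [colExt_of_le le_rfl h0]; exact (hη.mem 1 le_rfl h0).1
  rw [colExt_of_le hi0 hi]
  rcases Nat.lt_or_ge i m.len with hlt | hge
  · rw [colExt_of_le (by omega) hlt]; exact hη.mono i (i + 1) hi0 (by omega) hlt
  · rw [colExt_of_lt (by omega)]; have := hη.mem i hi0 hi; omega

lemma valExt_lt_succ (hη : IsOcc m p η) {j : ℕ} (hj : j ≤ m.len) :
    valExt m p η j < valExt m p η (j + 1) := by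
  rcases Nat.eq_zero_or_pos j with rfl | hj0
  · rcases Nat.eq_zero_or_pos m.len with h0 | h0
    · simp [valExt_of_lt (show m.len < 0 + 1 by omega)]
    · have := pos_mem le_rfl h0
      rw [valExt_of_le le_rfl h0]; exact (hη.perm_mem this.1 this.2).1
  have hpj := pos_mem hj0 hj
  rw [valExt_of_le hj0 hj]
  rcases Nat.lt_or_ge j m.len with hlt | hge
  · have hpj1 := pos_mem (v := j + 1) (by omega) hlt
    rw [valExt_of_le (by omega) hlt]
    have := hη.pattern _ _ hpj.1 hpj.2 hpj1.1 hpj1.2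
    rw [perm_pos hj0 hj, perm_pos (by omega) hlt] at this
    exact this.mp (by omega)
  · rw [valExt_of_lt (by omega)]; have := hη.perm_mem hpj.1 hpj.2; omega

lemma colExt_strictMonoOn (hη : IsOcc m p η) :
    StrictMonoOn (colExt m p η) (Set.Icc 0 (m.len + 1)) :=
  strictMonoOn_of_lt_succ Set.ordConnected_Icc fun i _ _ hi => hη.colExt_lt_succ (by
    simp only [Order.succ_eq_add_one, Set.mem_Icc] at hi; omega)

lemma valExt_strictMonoOn (hη : IsOcc m p η) :
    StrictMonoOn (valExt m p η) (Set.Icc 0 (m.len + 1)) :=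
  strictMonoOn_of_lt_succ Set.ordConnected_Icc fun j _ _ hj => hη.valExt_lt_succ (by
    simp only [Order.succ_eq_add_one, Set.mem_Icc] at hj; omega)

lemma corner_mem_sh (hη : IsOcc m p η) {i j : ℕ} (hq : (i, j) ∈ m.sh) :
    (colExt m p η i, valExt m p η j) ∈ p.sh :=
  hη.shaded (i, j) hq _ _ ⟨le_rfl, hη.colExt_lt_succ (m.sh_mem _ hq).1, le_rfl,
    hη.valExt_lt_succ (m.sh_mem _ hq).2⟩

/-- Otherwise the box `(0, 1)` of `p` would lie in the region of the box `(0, 0)` of `m`. -/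
lemma perm_pos_one (hη : IsOcc m p η) (h00 : (0, 0) ∈ m.sh)
    (hrow : ∀ a b, (a, b) ∈ p.sh → b = 0) (hm : 1 ≤ m.len) : p.perm (η (m.pos 1)) = 1 := by
  have h1 := pos_mem le_rfl hm
  have hv := hη.perm_mem h1.1 h1.2
  by_contra hne
  have := hrow 0 1 (hη.shaded (0, 0) h00 0 1 ⟨le_rfl, ?_, by simp, ?_⟩)
  · omega
  · simpa using hη.colExt_lt_succ (Nat.zero_le _)
  · rw [zero_add, valExt_of_le le_rfl hm]; omega

end IsOcc

lemma perm_eq_of_le_of_len_eq (hle : c ≤ c') (hlen : c.len = c'.len) : c.perm = c'.perm := by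
  obtain ⟨η, hη⟩ := hle
  have hid : ∀ i ∈ Set.Icc 1 c.len, η i = i := fun i hi =>
    hη.strictMonoOn.apply_eq_self (fun j hj => by
      have := hη.mem j hj.1 hj.2; exact ⟨this.1, hlen ▸ this.2⟩) hi
  have hψ : StrictMonoOn (fun v => c'.perm (c.pos v)) (Set.Icc 1 c.len) := by
    intro u hu v hv huv
    have hpu := pos_mem hu.1 hu.2
    have hpv := pos_mem hv.1 hv.2
    have := hη.pattern _ _ hpu.1 hpu.2 hpv.1 hpv.2
    rwa [perm_pos hu.1 hu.2, perm_pos hv.1 hv.2, hid _ hpu, hid _ hpv, iff_true_intro huv,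
      true_iff] at this
  funext i
  by_cases hi : 1 ≤ i ∧ i ≤ c.len
  · have hv := c.perm_mem i hi.1 hi.2
    have := hψ.apply_eq_self (fun v hv => by
      have := pos_mem hv.1 hv.2; exact ⟨(c'.perm_mem _ this.1 (hlen ▸ this.2)).1,
        hlen ▸ (c'.perm_mem _ this.1 (hlen ▸ this.2)).2⟩) hv
    simp only [pos_perm hi.1 hi.2] at this
    exact this.symm
  · rw [c.perm_zero i (by omega), c'.perm_zero i (by omega)]

/-- The class `Γ`, with the descent of `cl c` at position `d`. -/
structure IsGamma (c : MeshPattern) (d : ℕ) : Prop where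
  one_le : 1 ≤ d
  lt_len : d < c.len
  perm_succ : c.perm (d + 1) = 1
  perm_lt_perm_succ : ∀ i, 1 ≤ i → i < c.len → i ≠ d → c.perm i < c.perm (i + 1)
  sh_eq : c.sh = (Finset.range (d + 1)).image (fun i => (i, 0))

namespace IsGamma

lemma pos_one (hc : IsGamma c d) : c.pos 1 = d + 1 :=
  pos_eq_of_perm_eq (by omega) (by have := hc.lt_len; omega) hc.perm_succ

lemma mem_sh (hc : IsGamma c d) {a b : ℕ} : (a, b) ∈ c.sh ↔ a ≤ d ∧ b = 0 := by
  rw [hc.sh_eq]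
  simp only [Finset.mem_image, Finset.mem_range, Prod.mk.injEq]
  constructor
  · rintro ⟨i, hi, rfl, rfl⟩; omega
  · rintro ⟨ha, rfl⟩; exact ⟨a, by omega, rfl, rfl⟩

lemma perm_lt_perm (hc : IsGamma c d) {i j : ℕ} (hi : 1 ≤ i) (hij : i < j) (hj : j ≤ c.len)
    (hside : i ≤ d ↔ j ≤ d) : c.perm i < c.perm j := by
  have hmono : ∀ a b, (∀ k, a ≤ k → k < b → 1 ≤ k ∧ k < c.len ∧ k ≠ d) →
      StrictMonoOn c.perm (Set.Icc a b) := fun a b hab =>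
    strictMonoOn_of_lt_succ Set.ordConnected_Icc fun k _ hk hk1 => by
      simp only [Order.succ_eq_add_one, Set.mem_Icc] at hk hk1
      obtain ⟨h1, h2, h3⟩ := hab k hk.1 (by omega)
      exact hc.perm_lt_perm_succ k h1 h2 h3
  by_cases hjd : j ≤ d
  · exact hmono 1 d (fun k _ _ => by have := hc.lt_len; omega) ⟨hi, by omega⟩
      ⟨by omega, hjd⟩ hij
  · exact hmono (d + 1) c.len (fun k _ _ => by omega) ⟨by omega, by omega⟩
      ⟨by omega, hj⟩ hij

lemma pos_lt_pos (hc : IsGamma c d) {u v : ℕ} (hu : 1 ≤ u) (huv : u < v) (hv : v ≤ c.len)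
    (hside : c.pos u ≤ d ↔ c.pos v ≤ d) : c.pos u < c.pos v := by
  have hpu := pos_mem (m := c) hu (by omega)
  have hpv := pos_mem (m := c) (by omega) hv
  by_contra! hle
  rcases hle.eq_or_lt with heq | hlt
  · have := congrArg c.perm heq
    rw [perm_pos (by omega) hv, perm_pos hu (by omega)] at this
    omega
  · have := hc.perm_lt_perm hpv.1 hlt hpu.2 hside.symm
    rw [perm_pos (by omega) hv, perm_pos hu (by omega)] at this
    omega

end IsGamma

structure IsLetterEmbedding (c c' : MeshPattern) (φ : ℕ → ℕ) : Prop where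
  mapsTo : Set.MapsTo φ (Set.Icc 1 c.len) (Set.Icc 1 c'.len)
  strictMonoOn : StrictMonoOn φ (Set.Icc 1 c.len)
  map_one : φ 1 = 1
  pos_lt_pos_one_iff : ∀ k ∈ Set.Icc 1 c.len, c'.pos (φ k) < c'.pos 1 ↔ c.pos k < c.pos 1

lemma IsLetterEmbedding.two_le (hφ : IsLetterEmbedding c c' φ) {k : ℕ}
    (hk : k ∈ Set.Icc 2 c.len) : 2 ≤ φ k := by
  obtain ⟨hk2, hkc⟩ := hk
  have := hφ.strictMonoOn ⟨le_rfl, by omega⟩ ⟨by omega, hkc⟩ (show 1 < k by omega)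
  rw [hφ.map_one] at this
  omega

lemma IsOcc.isLetterEmbedding (hη : IsOcc c c' η) (h00 : (0, 0) ∈ c.sh)
    (hrow : ∀ a b, (a, b) ∈ c'.sh → b = 0) (hc : 1 ≤ c.len) :
    IsLetterEmbedding c c' (fun k => c'.perm (η (c.pos k))) where
  mapsTo k hk := hη.perm_mem (pos_mem hk.1 hk.2).1 (pos_mem hk.1 hk.2).2
  strictMonoOn u hu v hv huv := by
    have hpu := pos_mem hu.1 hu.2
    have hpv := pos_mem hv.1 hv.2
    have := hη.pattern _ _ hpu.1 hpu.2 hpv.1 hpv.2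
    rwa [perm_pos hu.1 hu.2, perm_pos hv.1 hv.2, iff_true_intro huv, true_iff] at this
  map_one := hη.perm_pos_one h00 hrow hc
  pos_lt_pos_one_iff k hk := by
    have hpk := pos_mem hk.1 hk.2
    have hp1 := pos_mem le_rfl hc
    have hmk := hη.mem _ hpk.1 hpk.2
    have hm1 := hη.mem _ hp1.1 hp1.2
    rw [pos_perm hmk.1 hmk.2, pos_eq_of_perm_eq hm1.1 hm1.2 (hη.perm_pos_one h00 hrow hc)]
    exact hη.strictMonoOn.lt_iff_lt hpk hp1

namespace IsGamma

lemma pos_le_iff (hc : IsGamma c d) (hc' : IsGamma c' d') (hφ : IsLetterEmbedding c c' φ)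
    {k : ℕ} (hk : k ∈ Set.Icc 1 c.len) : c'.pos (φ k) ≤ d' ↔ c.pos k ≤ d := by
  have := hφ.pos_lt_pos_one_iff k hk
  rw [hc.pos_one, hc'.pos_one] at this
  omega

lemma strictMonoOn_pos_comp_perm (hc : IsGamma c d) (hc' : IsGamma c' d')
    (hφ : IsLetterEmbedding c c' φ) :
    StrictMonoOn (fun i => c'.pos (φ (c.perm i))) (Set.Icc 1 c.len) := by
  have hside : ∀ i ∈ Set.Icc 1 c.len, c'.pos (φ (c.perm i)) ≤ d' ↔ i ≤ d := fun i hi => by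
    simpa only [pos_perm hi.1 hi.2] using hc.pos_le_iff hc' hφ (c.perm_mem i hi.1 hi.2)
  intro i hi j hj hij
  by_cases hsame : i ≤ d ↔ j ≤ d
  · have hi' := hφ.mapsTo (c.perm_mem i hi.1 hi.2)
    have hj' := hφ.mapsTo (c.perm_mem j hj.1 hj.2)
    exact hc'.pos_lt_pos hi'.1 (hφ.strictMonoOn (c.perm_mem i hi.1 hi.2)
      (c.perm_mem j hj.1 hj.2) (hc.perm_lt_perm hi.1 hij hj.2 hsame)) hj'.2
      ((hside i hi).trans (hsame.trans (hside j hj).symm))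
  · have := hside i hi
    have := hside j hj
    dsimp only
    omega

lemma le_of_isLetterEmbedding (hc : IsGamma c d) (hc' : IsGamma c' d')
    (hφ : IsLetterEmbedding c c' φ) : c ≤ c' := by
  set ψ : ℕ → ℕ := fun i => c'.pos (φ (c.perm i))
  have hψ := hc.strictMonoOn_pos_comp_perm hc' hφ
  have hψd : ψ (d + 1) = d' + 1 := by
    simp only [ψ, hc.perm_succ, hφ.map_one, hc'.pos_one]
  set η : ℕ → ℕ := fun i => if 1 ≤ i ∧ i ≤ c.len then ψ i else 0
  have hη : ∀ i ∈ Set.Icc 1 c.len, η i = ψ i := fun i hi => if_pos hi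
  have hperm : ∀ i ∈ Set.Icc 1 c.len, c'.perm (η i) = φ (c.perm i) := fun i hi => by
    have := hφ.mapsTo (c.perm_mem i hi.1 hi.2)
    rw [hη i hi, perm_pos this.1 this.2]
  have hval1 : valExt c c' η 1 = 1 := by
    have := hc.lt_len
    rw [valExt_of_le le_rfl (by omega), hc.pos_one, hperm _ ⟨by omega, by omega⟩, hc.perm_succ,
      hφ.map_one]
  refine ⟨η, fun i hi => if_neg (by omega), fun i h1 h2 => ?_, fun i j hi hij hj => ?_,
    fun i j hi1 hi2 hj1 hj2 => ?_, ?_, ?_⟩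
  · have := hφ.mapsTo (c.perm_mem i h1 h2)
    rw [hη i ⟨h1, h2⟩]; exact pos_mem this.1 this.2
  · rw [hη i ⟨hi, by omega⟩, hη j ⟨by omega, hj⟩]
    exact hψ ⟨hi, by omega⟩ ⟨by omega, hj⟩ hij
  · rw [hperm i ⟨hi1, hi2⟩, hperm j ⟨hj1, hj2⟩]
    exact (hφ.strictMonoOn.lt_iff_lt (c.perm_mem i hi1 hi2) (c.perm_mem j hj1 hj2)).symm
  · rintro ⟨a, b⟩ hq y - - ⟨-, -, hlow, hhigh⟩
    obtain ⟨-, rfl⟩ := hc.mem_sh.mp hq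
    rw [valExt_zero] at hlow
    rw [zero_add, hval1] at hhigh
    omega
  · rintro ⟨i, b⟩ hq a b' ⟨-, ha, -, hb'⟩
    obtain ⟨hi, rfl⟩ := hc.mem_sh.mp hq
    have := hc.lt_len
    dsimp only at ha hb'
    rw [zero_add, hval1] at hb'
    rw [colExt_of_le (by omega) (by omega), hη _ ⟨by omega, by omega⟩] at ha
    have : ψ (i + 1) ≤ ψ (d + 1) :=
      hψ.monotoneOn ⟨by omega, by omega⟩ ⟨by omega, by omega⟩ (by omega)
    exact hc'.mem_sh.mpr ⟨by omega, by omega⟩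

end IsGamma

lemma length_wordOf (c : MeshPattern) : c.wordOf.length = c.len - 1 := by
  simp [wordOf]

lemma getElem?_wordOf (c : MeshPattern) (k : ℕ) :
    c.wordOf[k]? = if k + 1 < c.len then some !decide (c.pos (k + 2) < c.pos 1) else none := by
  split_ifs with h
  · simp [wordOf, List.getElem?_range (show k < c.len - 1 by omega)]
  · rw [List.getElem?_eq_none (by rw [length_wordOf]; omega)]

lemma exists_isLetterEmbedding_of_wordOf_sublist (hc' : 1 ≤ c'.len)
    (h : c.wordOf.Sublist c'.wordOf) : ∃ φ, IsLetterEmbedding c c' φ := by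
  obtain ⟨f, hf⟩ := List.sublist_iff_exists_orderEmbedding_getElem?_eq.mp h
  have hletter : ∀ k ∈ Set.Icc 2 c.len, f (k - 2) + 2 ≤ c'.len ∧
      (c'.pos (f (k - 2) + 2) < c'.pos 1 ↔ c.pos k < c.pos 1) := by
    rintro k ⟨hk2, hkc⟩
    have := hf (k - 2)
    rw [getElem?_wordOf, getElem?_wordOf, if_pos (by omega), show k - 2 + 2 = k by omega]
      at this
    split_ifs at this
    simp only [Option.some.injEq, Bool.not_inj_iff, decide_eq_decide] at this
    exact ⟨by omega, this.symm⟩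
  have hφ : StrictMono fun k => if k < 2 then k else f (k - 2) + 2 := by
    refine strictMono_nat_of_lt_succ fun k => ?_
    rcases Nat.lt_or_ge k 1 with hk | hk
    · simp [show k = 0 by omega]
    · rcases Nat.eq_or_lt_of_le hk with rfl | hk
      · simp
      · simp only [show ¬ k < 2 by omega, show ¬ k + 1 < 2 by omega, if_false]
        have := f.strictMono (show k - 2 < k + 1 - 2 by omega)
        omega
  refine ⟨_, ⟨fun k hk => ?_, hφ.strictMonoOn _, rfl, fun k hk => ?_⟩⟩ <;>
    rcases Nat.eq_or_lt_of_le hk.1 with rfl | hk2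
  · exact ⟨le_rfl, hc'⟩
  · simp only [show ¬ k < 2 by omega, if_false]
    exact ⟨by omega, (hletter k ⟨hk2, hk.2⟩).1⟩
  · simp
  · simp only [show ¬ k < 2 by omega, if_false]
    exact (hletter k ⟨hk2, hk.2⟩).2

lemma IsLetterEmbedding.wordOf_sublist (hφ : IsLetterEmbedding c c' φ) :
    c.wordOf.Sublist c'.wordOf := by
  rw [List.sublist_iff_exists_fin_orderEmbedding_get_eq]
  have hx : ∀ x : Fin c.wordOf.length, (x : ℕ) + 2 ∈ Set.Icc 2 c.len := fun x => by
    have : (x : ℕ) < c.len - 1 := by simpa [length_wordOf] using x.2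
    exact ⟨by omega, by omega⟩
  have hφx : ∀ x : Fin c.wordOf.length, 2 ≤ φ (x + 2) ∧ φ (x + 2) ≤ c'.len := fun x =>
    ⟨hφ.two_le (hx x), (hφ.mapsTo ⟨by omega, (hx x).2⟩).2⟩
  have hlen : ∀ x : Fin c.wordOf.length, φ (x + 2) - 2 < c'.wordOf.length := fun x => by
    rw [length_wordOf c']
    have := hφx x
    omega
  refine ⟨OrderEmbedding.ofStrictMono (fun x => ⟨φ (x + 2) - 2, hlen x⟩) fun x y hxy => ?_,
    fun x => ?_⟩
  · have := hφ.strictMonoOn ⟨by omega, (hx x).2⟩ ⟨by omega, (hx y).2⟩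
      (show (x : ℕ) + 2 < y + 2 by simpa using hxy)
    have := hφx x
    change φ (x + 2) - 2 < φ (y + 2) - 2
    omega
  · have := hφx x
    apply Option.some.inj
    change some c.wordOf[(x : ℕ)] = some (c'.wordOf[φ (x + 2) - 2]'(hlen x))
    rw [← List.getElem?_eq_getElem, ← List.getElem?_eq_getElem, getElem?_wordOf,
      getElem?_wordOf, if_pos (by have := (hx x).2; omega), if_pos (by omega),
      show φ (x + 2) - 2 + 2 = φ (x + 2) by omega]
    simp only [hφ.pos_lt_pos_one_iff _ ⟨by omega, (hx x).2⟩]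

namespace IsGamma

lemma le_iff_wordOf_sublist (hc : IsGamma c d) (hc' : IsGamma c' d') :
    c ≤ c' ↔ c.wordOf.Sublist c'.wordOf := by
  constructor
  · rintro ⟨η, hη⟩
    exact (hη.isLetterEmbedding (hc.mem_sh.mpr ⟨Nat.zero_le _, rfl⟩)
      (fun _ _ h => (hc'.mem_sh.mp h).2) (by have := hc.lt_len; omega)).wordOf_sublist
  · intro h
    obtain ⟨φ, hφ⟩ := exists_isLetterEmbedding_of_wordOf_sublist
      (by have := hc'.lt_len; omega) h
    exact hc.le_of_isLetterEmbedding hc' hφ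

lemma eq_of_le_of_len_eq (hc : IsGamma c d) (hc' : IsGamma c' d') (hle : c ≤ c')
    (hlen : c.len = c'.len) : c = c' := by
  have hperm := perm_eq_of_le_of_len_eq hle hlen
  have hd : d = d' := by
    have h := hc.pos_one
    rw [pos, hperm, ← pos, hc'.pos_one] at h
    omega
  exact ext hlen hperm (by rw [hc.sh_eq, hc'.sh_eq, hd])

end IsGamma

def ofList (l : List ℕ) (hl : l.Perm (List.range' 1 l.length)) (s : Finset (ℕ × ℕ))
    (hs : ∀ q ∈ s, q.1 ≤ l.length ∧ q.2 ≤ l.length) : MeshPattern where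
  len := l.length
  perm i := (0 :: l).getD i 0
  sh := s
  perm_mem i h1 h2 := by
    obtain ⟨j, rfl⟩ : ∃ j, i = j + 1 := ⟨i - 1, by omega⟩
    rw [List.getD_cons_succ, List.getD_eq_getElem _ _ (by omega)]
    have := List.mem_range'_1.mp (hl.subset (List.getElem_mem (show j < l.length by omega)))
    omega
  perm_zero i h := by
    rcases h with rfl | h
    · rfl
    · exact List.getD_eq_default _ _ (by simp; omega)
  perm_inj i j h1 h2 h3 h4 h := by
    obtain ⟨i, rfl⟩ : ∃ i', i = i' + 1 := ⟨i - 1, by omega⟩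
    obtain ⟨j, rfl⟩ : ∃ j', j = j' + 1 := ⟨j - 1, by omega⟩
    simp only [List.getD_cons_succ] at h
    rw [List.getD_eq_getElem _ _ (by omega), List.getD_eq_getElem _ _ (by omega)] at h
    rw [((hl.nodup_iff.mpr (List.nodup_range' _)).getElem_inj_iff).mp h]
  perm_surj v h1 h2 := by
    obtain ⟨j, hj, rfl⟩ :=
      List.getElem_of_mem (hl.symm.subset (List.mem_range'_1.mpr ⟨h1, by omega⟩))
    exact ⟨j + 1, by omega, hj, by rw [List.getD_cons_succ, List.getD_eq_getElem]⟩
  sh_mem := hs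

lemma ofList_perm_succ {l : List ℕ} {hl s hs} {i : ℕ} (hi : i < l.length) :
    (ofList l hl s hs).perm (i + 1) = l[i] :=
  List.getD_cons_succ.trans (List.getD_eq_getElem _ _ hi)

def leftVals (u : List Bool) : List ℕ :=
  (List.range' 2 u.length).filter fun v => !u.getD (v - 2) true

def rightVals (u : List Bool) : List ℕ :=
  (List.range' 2 u.length).filter fun v => u.getD (v - 2) true

def gammaList (u : List Bool) : List ℕ := leftVals u ++ 1 :: rightVals u

lemma mem_leftVals {u : List Bool} {v : ℕ} :
    v ∈ leftVals u ↔ 2 ≤ v ∧ v < u.length + 2 ∧ u.getD (v - 2) true = false := by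
  simp [leftVals, List.mem_range'_1, and_assoc, add_comm]

lemma mem_rightVals {u : List Bool} {v : ℕ} :
    v ∈ rightVals u ↔ 2 ≤ v ∧ v < u.length + 2 ∧ u.getD (v - 2) true = true := by
  simp [rightVals, List.mem_range'_1, and_assoc, add_comm]

lemma gammaList_perm (u : List Bool) : (gammaList u).Perm (List.range' 1 (u.length + 1)) := by
  rw [List.range'_succ]
  refine List.perm_middle.trans (List.Perm.cons 1 ?_)
  simpa [leftVals, rightVals] using
    List.filter_append_perm (fun v => !u.getD (v - 2) true) (List.range' 2 u.length)

lemma length_gammaList (u : List Bool) : (gammaList u).length = u.length + 1 := by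
  simpa using (gammaList_perm u).length_eq

lemma length_leftVals_add_length_rightVals (u : List Bool) :
    (leftVals u).length + (rightVals u).length = u.length := by
  have := length_gammaList u
  simp only [gammaList, List.length_append, List.length_cons] at this
  omega

/-- The pattern of `Γ` with word `u`: the letters `k + 2` with `u[k] = 0` in increasing order,
then `1`, then the remaining letters in increasing order, with the boxes south-west of `1`
shaded. -/
def gammaOf (u : List Bool) : MeshPattern :=
  ofList (gammaList u) (by rw [length_gammaList]; exact gammaList_perm u)
    ((Finset.range ((leftVals u).length + 1)).image fun i => (i, 0))
    (by
      simp only [Finset.mem_image, Finset.mem_range, length_gammaList]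
      rintro _ ⟨i, hi, rfl⟩
      have := length_leftVals_add_length_rightVals u
      exact ⟨by omega, Nat.zero_le _⟩)

lemma len_gammaOf (u : List Bool) : (gammaOf u).len = u.length + 1 := length_gammaList u

lemma gammaOf_perm_succ {u : List Bool} {i : ℕ} (hi : i < u.length + 1) :
    (gammaOf u).perm (i + 1) = (gammaList u)[i]'(by rw [length_gammaList]; exact hi) :=
  ofList_perm_succ _

lemma gammaOf_perm_left {u : List Bool} {j : ℕ} (hj : j < (leftVals u).length) :
    (gammaOf u).perm (j + 1) = (leftVals u)[j] := by
  rw [gammaOf_perm_succ (by have := length_leftVals_add_length_rightVals u; omega)]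
  simp only [gammaList, List.getElem_append_left hj]

lemma gammaOf_perm_mid (u : List Bool) : (gammaOf u).perm ((leftVals u).length + 1) = 1 := by
  rw [gammaOf_perm_succ (by have := length_leftVals_add_length_rightVals u; omega)]
  simp [gammaList]

lemma gammaOf_perm_right {u : List Bool} {j : ℕ} (hj : j < (rightVals u).length) :
    (gammaOf u).perm ((leftVals u).length + 1 + j + 1) = (rightVals u)[j] := by
  rw [gammaOf_perm_succ (by have := length_leftVals_add_length_rightVals u; omega)]
  simp only [gammaList]
  rw [List.getElem_append_right (by omega : (leftVals u).length ≤ (leftVals u).length + 1 + j)]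
  simp [show (leftVals u).length + 1 + j - (leftVals u).length = j + 1 by omega]

lemma isGamma_gammaOf {u : List Bool} (hu : false ∈ u) :
    IsGamma (gammaOf u) (leftVals u).length where
  one_le := by
    obtain ⟨k, hk, hku⟩ := List.getElem_of_mem hu
    refine List.length_pos_of_mem (a := k + 2) (mem_leftVals.mpr ⟨by omega, by omega, ?_⟩)
    rwa [Nat.add_sub_cancel, List.getD_eq_getElem _ _ hk]
  lt_len := by
    show (leftVals u).length < (gammaOf u).len
    have := length_leftVals_add_length_rightVals u
    rw [len_gammaOf]
    omega
  perm_succ := gammaOf_perm_mid u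
  perm_lt_perm_succ i h1 h2 hi := by
    obtain ⟨j, rfl⟩ : ∃ j, i = j + 1 := ⟨i - 1, by omega⟩
    rw [len_gammaOf] at h2
    replace hi : j + 1 ≠ (leftVals u).length := hi
    rw [gammaOf_perm_succ (by omega), gammaOf_perm_succ (by omega)]
    refine List.rel_getElem_append_succ (A := leftVals u)
      ((List.pairwise_lt_range' _).filter _)
      (List.Pairwise.cons (fun v hv => ?_) ((List.pairwise_lt_range' _).filter _)) _ hi
    have := (mem_rightVals.mp hv).1
    omega
  sh_eq := rfl

lemma wordOf_gammaOf (u : List Bool) : (gammaOf u).wordOf = u := by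
  have hlen := length_leftVals_add_length_rightVals u
  have hpos1 : (gammaOf u).pos 1 = (leftVals u).length + 1 :=
    pos_eq_of_perm_eq (by omega) (by rw [len_gammaOf]; omega) (gammaOf_perm_mid u)
  refine List.ext_getElem? fun k => ?_
  rw [getElem?_wordOf, len_gammaOf]
  split_ifs with hk
  · replace hk : k < u.length := by omega
    have hletter : u.getD (k + 2 - 2) true = u[k] := by
      rw [Nat.add_sub_cancel, List.getD_eq_getElem _ _ hk]
    rw [List.getElem?_eq_getElem hk, hpos1]
    cases hku : u[k]
    · obtain ⟨j, hj, hjk⟩ := List.getElem_of_mem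
        (mem_leftVals (u := u) (v := k + 2) |>.mpr ⟨le_add_self, by omega, hletter.trans hku⟩)
      rw [← hjk, ← gammaOf_perm_left hj, pos_perm (by omega) (by rw [len_gammaOf]; omega)]
      simp [hj]
    · obtain ⟨j, hj, hjk⟩ := List.getElem_of_mem
        (mem_rightVals (u := u) (v := k + 2) |>.mpr ⟨le_add_self, by omega, hletter.trans hku⟩)
      rw [← hjk, ← gammaOf_perm_right hj, pos_perm (by omega) (by rw [len_gammaOf]; omega),
        decide_eq_false (by omega)]
      rfl
  · rw [List.getElem?_eq_none (by omega)]

lemma isGamma_pat21 : IsGamma pat21 1 where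
  one_le := le_rfl
  lt_len := by decide
  perm_succ := rfl
  perm_lt_perm_succ i h1 h2 hi := absurd (show i = 1 by simp [pat21, ofRev] at h2; omega) hi
  sh_eq := by decide

lemma wordOf_pat21 : pat21.wordOf = [false] := by
  have h2 : pat21.pos 2 = 1 := pos_eq_of_perm_eq le_rfl (by decide) rfl
  simp [wordOf, show pat21.len = 2 from rfl, h2, isGamma_pat21.pos_one]

/-- The region of a shaded box contains its south-west box and the box just left of its east
boundary, and both must be shaded in `c'`. -/
lemma IsOcc.sh_subset_of_isGamma (hη : IsOcc c c' η) (hc' : IsGamma c' d')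
    (h1 : c'.perm (η (c.pos 1)) = 1) (hc : 1 ≤ c.len) :
    c.sh ⊆ (Finset.range (c.pos 1)).image fun i => (i, 0) := by
  rintro ⟨a, b⟩ hab
  have hp1 := pos_mem le_rfl hc
  have hη1 : η (c.pos 1) = d' + 1 := by
    rw [← hc'.pos_one]
    exact (pos_eq_of_perm_eq (hη.mem _ hp1.1 hp1.2).1 (hη.mem _ hp1.1 hp1.2).2 h1).symm
  have hbound : a ≤ c.len ∧ b ≤ c.len := c.sh_mem _ hab
  have hb : b = 0 := by
    by_contra hb
    have hlt := hη.valExt_strictMonoOn (show 0 ∈ Set.Icc 0 (c.len + 1) by simp)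
      ⟨Nat.zero_le b, by omega⟩ (Nat.pos_of_ne_zero hb)
    rw [valExt_zero, (hc'.mem_sh.mp (hη.corner_mem_sh hab)).2] at hlt
    exact lt_irrefl 0 hlt
  subst hb
  have hcol := hη.colExt_lt_succ hbound.1
  have hright := hc'.mem_sh.mp (hη.shaded (a, 0) hab (colExt c c' η (a + 1) - 1) 0
    ⟨by dsimp only; omega, by dsimp only; omega, by simp,
      by simpa using hη.valExt_lt_succ (Nat.zero_le c.len)⟩)
  simp only [Finset.mem_image, Finset.mem_range, Prod.mk.injEq, and_true]
  refine ⟨a, ?_, rfl⟩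
  by_contra! ha
  have := hη.colExt_strictMonoOn ⟨Nat.zero_le _, by omega⟩ ⟨Nat.zero_le _, by omega⟩
    (show c.pos 1 < a + 1 by omega)
  rw [colExt_of_le hp1.1 hp1.2, hη1] at this
  omega

lemma IsOcc.range_subset_sh_of_pat21 (hη : IsOcc pat21 c η) (h1 : c.perm (η 2) = 1) :
    (Finset.range (η 2)).image (fun i => (i, 0)) ⊆ c.sh := by
  have hval : valExt pat21 c η 1 = 1 := by
    rw [valExt_of_le le_rfl (by decide), isGamma_pat21.pos_one, h1]
  simp only [Finset.subset_iff, Finset.mem_image, Finset.mem_range]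
  rintro _ ⟨a, ha, rfl⟩
  rcases Nat.lt_or_ge a (η 1) with ha1 | ha1
  · refine hη.shaded (0, 0) (by decide) a 0
      ⟨by simp, ?_, by simp, by rw [zero_add, hval]; omega⟩
    rwa [zero_add, colExt_of_le le_rfl (by decide)]
  · refine hη.shaded (1, 0) (by decide) a 0 ⟨?_, ?_, by simp, by rw [zero_add, hval]; omega⟩
    · rwa [colExt_of_le le_rfl (by decide)]
    · rwa [colExt_of_le (by omega) (by decide)]

lemma IsOcc.perm_lt_perm_succ_of_isGamma (hη : IsOcc c c' η) (hc' : IsGamma c' d')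
    (hη1 : η (c.pos 1) = d' + 1) (hp1 : c.pos 1 ∈ Set.Icc 1 c.len) {i : ℕ} (h1 : 1 ≤ i)
    (h2 : i < c.len) (hi : i ≠ c.pos 1 - 1) : c.perm i < c.perm (i + 1) := by
  have hside : ∀ j ∈ Set.Icc 1 c.len, η j ≤ d' ↔ j < c.pos 1 := fun j hj => by
    rw [← hη.strictMonoOn.lt_iff_lt hj hp1, hη1]
    omega
  refine (hη.pattern i (i + 1) h1 h2.le (by omega) h2).mpr ?_
  refine hc'.perm_lt_perm (hη.mem i h1 h2.le).1 (hη.mono i (i + 1) h1 (by omega) h2)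
    (hη.mem (i + 1) (by omega) h2).2 ?_
  rw [hside i ⟨h1, h2.le⟩, hside (i + 1) ⟨by omega, h2⟩]
  omega

lemma isGamma_of_pat21_le_of_le (h21 : pat21 ≤ c) (hle : c ≤ c') (hc' : IsGamma c' d') :
    IsGamma c (c.pos 1 - 1) := by
  obtain ⟨θ, hθ⟩ := h21
  obtain ⟨η, hη⟩ := hle
  have hθ1 := hθ.mem 1 le_rfl (by decide)
  have hθ2 := hθ.mem 2 (by omega) le_rfl
  have hθ12 := hθ.mono 1 2 le_rfl (by omega) le_rfl
  have h00 : (0, 0) ∈ c.sh := by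
    simpa using hθ.corner_mem_sh (show (0, 0) ∈ pat21.sh by decide)
  have hp1 := pos_mem (m := c) le_rfl (by omega)
  have hη1 := hη.perm_pos_one h00 (fun _ _ h => (hc'.mem_sh.mp h).2) (by omega)
  have hsub := hη.sh_subset_of_isGamma hc' hη1 (by omega)
  have hθ2' : c.perm (θ 2) = 1 := by
    simpa [isGamma_pat21.pos_one] using hθ.perm_pos_one (by decide) (fun a b h => by
      obtain ⟨_, _, h⟩ := Finset.mem_image.mp (hsub h)
      exact (Prod.mk.inj h).2.symm) (by decide)
  have hpos : c.pos 1 = θ 2 := pos_eq_of_perm_eq hθ2.1 hθ2.2 hθ2'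
  refine ⟨by omega, by omega, by rw [Nat.sub_add_cancel hp1.1, perm_pos le_rfl (by omega)],
    fun i h1 h2 hi => hη.perm_lt_perm_succ_of_isGamma hc' ?_ hp1 h1 h2 hi, ?_⟩
  · rw [← hc'.pos_one]
    exact (pos_eq_of_perm_eq (hη.mem _ hp1.1 hp1.2).1 (hη.mem _ hp1.1 hp1.2).2 hη1).symm
  · rw [Nat.sub_add_cancel hp1.1]
    exact subset_antisymm hsub (hpos ▸ hθ.range_subset_sh_of_pat21 hθ2')

noncomputable def IsGamma.intervalOrderIso (hm : IsGamma m d) :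
    {c : MeshPattern // pat21 ≤ c ∧ c ≤ m} ≃o
      {u : Word // Word.mk [false] ≤ u ∧ u ≤ Word.mk m.wordOf} where
  toFun c :=
    have hc := isGamma_of_pat21_le_of_le c.2.1 c.2.2 hm
    ⟨⟨c.1.wordOf⟩, wordOf_pat21 ▸ (isGamma_pat21.le_iff_wordOf_sublist hc).mp c.2.1,
      (hc.le_iff_wordOf_sublist hm).mp c.2.2⟩
  invFun u :=
    have hlow : [false].Sublist u.1.toList := u.2.1
    have hup : u.1.toList.Sublist m.wordOf := u.2.2
    have hu := isGamma_gammaOf (hlow.subset (List.mem_singleton_self false))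
    ⟨gammaOf u.1.toList,
      (isGamma_pat21.le_iff_wordOf_sublist hu).mpr (by rwa [wordOf_pat21, wordOf_gammaOf]),
      (hu.le_iff_wordOf_sublist hm).mpr (by rwa [wordOf_gammaOf])⟩
  left_inv c := by
    have hc := isGamma_of_pat21_le_of_le c.2.1 c.2.2 hm
    have hw : false ∈ c.1.wordOf := ((isGamma_pat21.le_iff_wordOf_sublist hc).mp c.2.1).subset
      (by simp [wordOf_pat21])
    refine Subtype.ext ((isGamma_gammaOf hw).eq_of_le_of_len_eq hc ?_ ?_)
    · rw [(isGamma_gammaOf hw).le_iff_wordOf_sublist hc, wordOf_gammaOf]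
    · rw [len_gammaOf, length_wordOf]
      have := hc.lt_len
      omega
  right_inv u := Subtype.ext (congrArg Word.mk (wordOf_gammaOf u.1.toList))
  map_rel_iff' {c c'} :=
    ((isGamma_of_pat21_le_of_le c.2.1 c.2.2 hm).le_iff_wordOf_sublist
      (isGamma_of_pat21_le_of_le c'.2.1 c'.2.2 hm)).symm

theorem interval_gamma_iso_words_general (m : MeshPattern) (d : ℕ)
    (hd1 : 1 ≤ d) (hd2 : d < m.len)
    (huniq : ∀ i, 1 ≤ i → i < m.len → m.perm (i + 1) < m.perm i → i = d)
    (hbot : m.perm (d + 1) = 1)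
    (hsh : m.sh = (Finset.range (d + 1)).image (fun i => (i, 0))) :
    Nonempty ({c : MeshPattern // pat21 ≤ c ∧ c ≤ m} ≃o
      {u : Word // Word.mk [false] ≤ u ∧ u ≤ Word.mk m.wordOf}) := by
  refine ⟨IsGamma.intervalOrderIso ⟨hd1, hd2, hbot, fun i h1 h2 hi => ?_, hsh⟩⟩
  refine lt_of_le_of_ne (not_lt.mp fun h => hi (huniq i h1 h2 h)) fun h => ?_
  have := m.perm_inj i (i + 1) h1 h2.le (by omega) h2 h
  omega

/-- For `m` in the class `Γ` (one descent, at position `d`, with descent bottom the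
letter `1`, and exactly the boxes southwest of the point of value `1` shaded), the
interval `[21^{(0,0),(1,0)}, m]` of the mesh pattern poset is isomorphic to the interval
`[0, w]` in the poset of binary words under subword order, where `w = wordOf m`. -/
theorem interval_gamma_iso_words (m : MeshPattern) (d : ℕ)
    (hd1 : 1 ≤ d) (hd2 : d < m.len)
    (hdesc : m.perm (d + 1) < m.perm d)
    (huniq : ∀ i, 1 ≤ i → i < m.len → m.perm (i + 1) < m.perm i → i = d)
    (hbot : m.perm (d + 1) = 1)
    (hsh : m.sh = (Finset.range (d + 1)).image (fun i => (i, 0))) :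
    Nonempty ({c : MeshPattern // pat21 ≤ c ∧ c ≤ m} ≃o
      {u : Word // Word.mk [false] ≤ u ∧ u ≤ Word.mk m.wordOf}) :=
  interval_gamma_iso_words_general m d hd1 hd2 huniq hbot hsh

end MeshPattern
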